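/- Let φ ∈ C([0,∞);ℝ) with A_∞(φ) = ∞. For every real z and α > 0, T*_z(T_α(φ)) = T_{α e^z}(φ), where T_α(φ)(s) = φ(s) − log(1 + α A_s(φ)) and T*_z is defined using A_∞(T_α(φ)) = 1/α. -/

import Mathlib

open MeasureTheory Real Filter

noncomputable def pathA (φ : ℝ → ℝ) (s : ℝ) : ℝ := ∫ u in (0:ℝ)..s, Real.exp (2 * φ u)

noncomputable def pathAinf (φ : ℝ → ℝ) : ℝ := ∫ u in Set.Ioi (0:ℝ), Real.exp (2 * φ u)

noncomputable def pathTstar (z : ℝ) (φ : ℝ → ℝ) (s : ℝ) : ℝ :=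
  φ s - Real.log (1 + (pathA φ s / pathAinf φ) * (Real.exp z - 1))

noncomputable def pathTalpha (α : ℝ) (φ : ℝ → ℝ) (s : ℝ) : ℝ :=
  φ s - Real.log (1 + α * pathA φ s)

/-!
With `A = A(φ)` and `ψ = T_α(φ)` one has `e^{2ψ} = A' / (1 + α A)²`, the derivative of
`-1 / (α (1 + α A))`. Integrating gives `A_s(ψ) = A_s / (1 + α A_s)` and, since `A_s → ∞`,
`A_∞(ψ) = 1 / α`. Then `1 + (A_s(ψ) / A_∞(ψ)) (e^z - 1) = (1 + α e^z A_s) / (1 + α A_s)`, and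
taking logarithms turns `T*_z(ψ)` into `T_{α e^z}(φ)`.
-/

@[simp]
lemma pathA_zero (φ : ℝ → ℝ) : pathA φ 0 = 0 :=
  intervalIntegral.integral_same

lemma pathA_nonneg (φ : ℝ → ℝ) {s : ℝ} (hs : 0 ≤ s) : 0 ≤ pathA φ s :=
  intervalIntegral.integral_nonneg hs fun _ _ => (exp_pos _).le

lemma hasDerivAt_pathA {φ : ℝ → ℝ} (hφ : Continuous φ) (u : ℝ) :
    HasDerivAt (pathA φ) (exp (2 * φ u)) u :=
  ((continuous_const.mul hφ).rexp.integral_hasStrictDerivAt 0 u).hasDerivAt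

lemma one_add_mul_pathA_pos (φ : ℝ → ℝ) {α s : ℝ} (hα : 0 ≤ α) (hs : 0 ≤ s) :
    0 < 1 + α * pathA φ s := by
  have := mul_nonneg hα (pathA_nonneg φ hs)
  linarith

section PathTalpha

variable {φ : ℝ → ℝ} {α : ℝ}

lemma exp_two_mul_pathTalpha {u : ℝ} (hu : 1 + α * pathA φ u ≠ 0) :
    exp (2 * pathTalpha α φ u) = exp (2 * φ u) / (1 + α * pathA φ u) ^ 2 := by
  have hlog : 2 * log (1 + α * pathA φ u) = log ((1 + α * pathA φ u) ^ 2) := by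
    rw [log_pow, Nat.cast_ofNat]
  rw [pathTalpha, mul_sub, exp_sub, hlog, exp_log (by positivity)]

lemma hasDerivAt_pathTalpha_primitive (hφ : Continuous φ) (hα : α ≠ 0) {u : ℝ}
    (hu : 1 + α * pathA φ u ≠ 0) :
    HasDerivAt (fun v => -(1 / α) * (1 + α * pathA φ v)⁻¹) (exp (2 * pathTalpha α φ u)) u := by
  have hden : HasDerivAt (fun v => 1 + α * pathA φ v) (α * exp (2 * φ u)) u :=
    ((hasDerivAt_pathA hφ u).const_mul α).const_add 1
  refine ((hden.inv hu).const_mul (-(1 / α))).congr_deriv ?_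
  rw [exp_two_mul_pathTalpha hu]
  field_simp

lemma pathA_pathTalpha (hφ : Continuous φ) (hα : 0 < α) {s : ℝ} (hs : 0 ≤ s) :
    pathA (pathTalpha α φ) s = pathA φ s / (1 + α * pathA φ s) := by
  have hderiv : ∀ u ∈ Set.uIcc 0 s, HasDerivAt (fun v => -(1 / α) * (1 + α * pathA φ v)⁻¹)
      (exp (2 * pathTalpha α φ u)) u := fun u hu =>
    hasDerivAt_pathTalpha_primitive hφ hα.ne'
      (one_add_mul_pathA_pos φ hα.le (Set.uIcc_of_le hs ▸ hu).1).ne'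
  have hint : IntervalIntegrable (fun u => exp (2 * pathTalpha α φ u)) volume 0 s :=
    intervalIntegral.intervalIntegrable_deriv_of_nonneg
      (fun u hu => (hderiv u hu).continuousAt.continuousWithinAt)
      (fun u hu => hderiv u (Set.Ioo_subset_Icc_self hu)) fun _ _ => (exp_pos _).le
  rw [pathA, intervalIntegral.integral_eq_sub_of_hasDerivAt hderiv hint, pathA_zero]
  have hden := one_add_mul_pathA_pos φ hα.le hs
  field_simp
  ring

lemma pathAinf_pathTalpha (hφ : Continuous φ) (hA : Tendsto (pathA φ) atTop atTop)
    (hα : 0 < α) : pathAinf (pathTalpha α φ) = 1 / α := by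
  have hlim : Tendsto (fun v => -(1 / α) * (1 + α * pathA φ v)⁻¹) atTop (nhds 0) := by
    simpa using ((tendsto_atTop_add_const_left _ 1 (hA.const_mul_atTop hα)).inv_tendsto_atTop
      ).const_mul (-(1 / α))
  rw [pathAinf, integral_Ioi_of_hasDerivAt_of_nonneg'
    (fun u hu => hasDerivAt_pathTalpha_primitive hφ hα.ne'
      (one_add_mul_pathA_pos φ hα.le hu).ne')
    (fun _ _ => (exp_pos _).le) hlim]
  simp

end PathTalpha

theorem stmt12 (φ : ℝ → ℝ) (hφ : Continuous φ)
    (hAinf : Tendsto (fun s => pathA φ s) atTop atTop)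
    (z α : ℝ) (hα : 0 < α) (s : ℝ) (hs : 0 ≤ s) :
    pathTstar z (pathTalpha α φ) s = pathTalpha (α * Real.exp z) φ s := by
  have hden := one_add_mul_pathA_pos φ hα.le hs
  have hnum := one_add_mul_pathA_pos φ (mul_pos hα (exp_pos z)).le hs
  have harg : 1 + pathA φ s / (1 + α * pathA φ s) / (1 / α) * (exp z - 1)
      = (1 + α * exp z * pathA φ s) / (1 + α * pathA φ s) := by
    rw [div_div_eq_mul_div, div_one, div_mul_eq_mul_div, div_mul_eq_mul_div,
      one_add_div hden.ne']
    ring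
  rw [pathTstar, pathA_pathTalpha hφ hα hs, pathAinf_pathTalpha hφ hAinf hα, harg,
    log_div hnum.ne' hden.ne', pathTalpha, pathTalpha]
  ring
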